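/- arXiv:2301.12426 — 2 statements merged into one kernel-verified Lean document; each statement's English description precedes it below -/
import Mathlib

section
/- Green's relation D on the monoid IC_4 is the equality relation: for all α, β ∈ IC_4, if there exists γ ∈ IC_4 with α·IC_4 = γ·IC_4 and IC_4·γ = IC_4·β, then α = β. In other words, every D-class of IC_4 is a singleton. -/
/-! ### The i-Catalan monoids -/

/-- Partial maps of the chain `Fin m` (order-isomorphic to `1 < 2 < ⋯ < m`) that are injective,
order preserving and extensive; `toFun i = some j` means the map is defined at `i` with value
`j`, and `toFun i = none` means `i` is not in the domain. -/
structure ICmon (m : ℕ) where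
  toFun : Fin m → Option (Fin m)
  inj' : ∀ i j a, toFun i = some a → toFun j = some a → i = j
  mono' : ∀ i j a b, i ≤ j → toFun i = some a → toFun j = some b → a ≤ b
  extv' : ∀ i a, toFun i = some a → i ≤ a

namespace ICmon

@[ext] theorem ext {m : ℕ} {α β : ICmon m} (h : α.toFun = β.toFun) : α = β := by
  cases α; cases β; cases h; rfl

/-- Composition of partial maps, written left-to-right (`α * β` is "first `α`, then `β`"),
with the identity map as the unit. -/
instance (m : ℕ) : Monoid (ICmon m) where
  mul α β :=
    { toFun := fun i => (α.toFun i).bind β.toFun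
      inj' := by
        intro i j a hi hj
        rcases Option.bind_eq_some_iff.mp hi with ⟨b, hb, hba⟩
        rcases Option.bind_eq_some_iff.mp hj with ⟨c, hc, hca⟩
        obtain rfl : b = c := β.inj' _ _ _ hba hca
        exact α.inj' _ _ _ hb hc
      mono' := by
        intro i j a b hij hi hj
        rcases Option.bind_eq_some_iff.mp hi with ⟨p, hp, hpa⟩
        rcases Option.bind_eq_some_iff.mp hj with ⟨q, hq, hqb⟩
        exact β.mono' _ _ _ _ (α.mono' _ _ _ _ hij hp hq) hpa hqb
      extv' := by
        intro i a hi
        rcases Option.bind_eq_some_iff.mp hi with ⟨p, hp, hpa⟩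
        exact le_trans (α.extv' _ _ hp) (β.extv' _ _ hpa) }
  one :=
    { toFun := fun i => some i
      inj' := by intro i j a hi hj; rw [Option.some_inj] at hi hj; rw [hi, hj]
      mono' := by
        intro i j a b hij hi hj
        rw [Option.some_inj] at hi hj; subst hi; subst hj; exact hij
      extv' := by intro i a hi; rw [Option.some_inj] at hi; exact hi.le }
  mul_assoc α β γ := by
    ext1; funext i
    show ((α.toFun i).bind β.toFun).bind γ.toFun
        = (α.toFun i).bind fun b => (β.toFun b).bind γ.toFun
    cases α.toFun i <;> rfl
  one_mul α := by ext1; funext i; rfl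
  mul_one α := by
    ext1; funext i
    show (α.toFun i).bind some = α.toFun i
    cases α.toFun i <;> rfl

end ICmon

/-- The 42-element i-Catalan monoid of all injective, order preserving and extensive partial
maps of the 4-element chain. -/
abbrev IC4 := ICmon 4

/-! ### Green's relations and the pseudovarieties `DS` and `LDS` -/

section Green
variable {S : Type*} [Semigroup S]

/-- The principal right ideal `xS¹ = {x} ∪ xS`. -/
def rIdeal (x : S) : Set S := insert x {z | ∃ u, x * u = z}

/-- The principal left ideal `S¹x = {x} ∪ Sx`. -/
def lIdeal (x : S) : Set S := insert x {z | ∃ u, u * x = z}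

/-- Green's relation `R`: `x R y` iff `xS¹ = yS¹`. -/
def GreenR (x y : S) : Prop := rIdeal x = rIdeal y

/-- Green's relation `L`: `x L y` iff `S¹x = S¹y`. -/
def GreenL (x y : S) : Prop := lIdeal x = lIdeal y

/-- Green's relation `D = R ∘ L`. -/
def GreenD (x y : S) : Prop := ∃ z, GreenR x z ∧ GreenL z y

/-- The local subsemigroup `eSe = {ese : s ∈ S}` of `S` (the local submonoid at `e` when `e`
is idempotent). -/
def localSub (e : S) : Subsemigroup S where
  carrier := {x | ∃ s : S, x = e * s * e}
  mul_mem' := by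
    rintro a b ⟨s, rfl⟩ ⟨t, rfl⟩
    exact ⟨s * e * (e * t), by simp [mul_assoc]⟩

end Green

/-- Membership in the pseudovariety `DS`: every `D`-class containing an idempotent is closed
under multiplication. -/
def MemDS (S : Type*) [Semigroup S] [Finite S] : Prop :=
  ∀ e x y : S, e * e = e → GreenD x e → GreenD y e → GreenD (x * y) e

/-- Membership in the pseudovariety `LDS`: every local submonoid `eSe` (for `e` idempotent)
lies in `DS`. -/
def MemLDS (S : Type*) [Semigroup S] [Finite S] : Prop :=
  ∀ e : S, e * e = e → MemDS (localSub e)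

/-! Extensive maps only move points upwards, so a point fixed by a product `u * v` of elements
of `ICmon m` is fixed by `u` and by `v`. Hence `α * u * v = α` forces `α * u = α`, and
`u * v * β = β` forces `v * β = β`; in a semigroup with these two cancellation properties the
relations `R` and `L`, and therefore `D`, are trivial. -/

section Green
variable {S : Type*} [Semigroup S]

theorem eq_of_greenR (hS : ∀ x u v : S, x * u * v = x → x * u = x) {x y : S}
    (h : GreenR x y) : x = y := by
  have hy : y ∈ rIdeal x := h ▸ Set.mem_insert y _
  have hx : x ∈ rIdeal y := h.symm ▸ Set.mem_insert x _
  rcases hy with rfl | ⟨u, rfl⟩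
  · rfl
  rcases hx with hx | ⟨v, hv⟩
  · exact hx
  · exact (hS x u v hv).symm

theorem eq_of_greenL (hS : ∀ x u v : S, u * v * x = x → v * x = x) {x y : S}
    (h : GreenL x y) : x = y := by
  have hy : y ∈ lIdeal x := h ▸ Set.mem_insert y _
  have hx : x ∈ lIdeal y := h.symm ▸ Set.mem_insert x _
  rcases hy with rfl | ⟨u, rfl⟩
  · rfl
  rcases hx with hx | ⟨v, hv⟩
  · exact hx
  · exact (hS x v u (by rwa [mul_assoc])).symm

theorem eq_of_greenD (hR : ∀ x u v : S, x * u * v = x → x * u = x)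
    (hL : ∀ x u v : S, u * v * x = x → v * x = x) {x y : S} (h : GreenD x y) : x = y := by
  obtain ⟨z, hxz, hzy⟩ := h
  exact (eq_of_greenR hR hxz).trans (eq_of_greenL hL hzy)

end Green

namespace ICmon

variable {m : ℕ}

@[simp] theorem mul_toFun (α β : ICmon m) (i : Fin m) :
    (α * β).toFun i = (α.toFun i).bind β.toFun := rfl

theorem fixed_of_mul_fixed {u v : ICmon m} {i : Fin m} (h : (u * v).toFun i = some i) :
    u.toFun i = some i ∧ v.toFun i = some i := by
  obtain ⟨j, hu, hv⟩ := Option.bind_eq_some_iff.mp h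
  obtain rfl : j = i := le_antisymm (v.extv' _ _ hv) (u.extv' _ _ hu)
  exact ⟨hu, hv⟩

theorem mul_eq_of_mul_mul_eq {α u v : ICmon m} (h : α * u * v = α) : α * u = α := by
  ext1; funext i
  cases ha : α.toFun i with
  | none => simp [ha]
  | some a =>
    have hfix : (u * v).toFun a = some a := by
      simpa [ha, mul_assoc] using congrFun (congrArg toFun h) i
    simp [ha, (fixed_of_mul_fixed hfix).1]

theorem mul_eq_of_mul_mul_eq_left {β u v : ICmon m} (h : u * v * β = β) : v * β = β := by
  have hfix : ∀ {i a}, β.toFun i = some a → v.toFun i = some i := by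
    intro i a ha
    have huvb : (u * v * β).toFun i = some a := by rw [h, ha]
    obtain ⟨k, hk, hka⟩ := Option.bind_eq_some_iff.mp huvb
    obtain rfl : k = i := β.inj' _ _ _ hka ha
    exact (fixed_of_mul_fixed hk).2
  ext1; funext i
  cases hb : β.toFun i with
  | some a => simp [hb, hfix hb]
  | none =>
    -- a point `j = v i` in the domain of `β` is also fixed by `v`, so `j = i` by injectivity
    cases hv : v.toFun i with
    | none => simp [hv]
    | some j =>
      cases hbj : β.toFun j with
      | none => simp [hv, hbj]
      | some a =>
        obtain rfl := v.inj' _ _ _ hv (hfix hbj)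
        simp [hb] at hbj

theorem eq_of_greenD {α β : ICmon m} (h : GreenD α β) : α = β :=
  _root_.eq_of_greenD (fun _ _ _ => mul_eq_of_mul_mul_eq) (fun _ _ _ => mul_eq_of_mul_mul_eq_left) h

end ICmon

/-- **Green's relation `D` on the monoid `IC₄` is the equality relation**: if there is
`γ ∈ IC₄` with `α·IC₄ = γ·IC₄` and `IC₄·γ = IC₄·β`, then `α = β`; every `D`-class of
`IC₄` is a singleton. -/
theorem IC4_GreenD_trivial (α β : IC4) (h : GreenD α β) : α = β :=
  ICmon.eq_of_greenD h
end

section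
/- Let S be a finite semigroup in LDS, let k be a positive integer such that s^k is idempotent for every s ∈ S, and let m be a positive integer such that g^m is the identity element of G for every subgroup G of S. Then for every n > |S|, the semigroup S satisfies the identity u_n ≈ u_n^{m+1}, where u_n is the word built from the parameters n and k. -/
/-! ### Identities and finite bases -/

/-- A semigroup `S` satisfies the identity `u ≈ v` (for words `u`, `v` in the free semigroup on
the countably infinite set of variables `ℕ`) if every homomorphism from the free semigroup to
`S` — equivalently, every substitution `f : ℕ → S` — equalizes `u` and `v`. -/
def Satisfies (S : Type*) [Semigroup S] (u v : FreeSemigroup ℕ) : Prop :=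
  ∀ f : ℕ → S, FreeSemigroup.lift f u = FreeSemigroup.lift f v

/-- A semigroup is finitely based if there is a finite set of identities it satisfies such that
every semigroup satisfying those identities satisfies every identity of `S`. -/
def FinitelyBased (S : Type*) [Semigroup S] : Prop :=
  ∃ B : Finset (FreeSemigroup ℕ × FreeSemigroup ℕ),
    (∀ p ∈ B, Satisfies S p.1 p.2) ∧
    ∀ (T : Type) [Semigroup T], (∀ p ∈ B, Satisfies T p.1 p.2) →
      ∀ u v : FreeSemigroup ℕ, Satisfies S u v → Satisfies T u v

/-- `T` belongs to the variety generated by `S`: `T` satisfies every identity of `S`. -/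
def InVarietyOf (T S : Type*) [Semigroup T] [Semigroup S] : Prop :=
  ∀ u v : FreeSemigroup ℕ, Satisfies S u v → Satisfies T u v

/-! ### Combinatorics of words, viewed as lists of variables -/

/-- The list of letters of a word of the free semigroup. -/
def wToList (w : FreeSemigroup ℕ) : List ℕ := w.head :: w.tail

/-- The word of the free semigroup whose list of letters is the given (nonempty) list
(a junk value is returned on the empty list). -/
def wOfList : List ℕ → FreeSemigroup ℕ
  | [] => FreeSemigroup.of 0
  | a :: l => ⟨a, l⟩

/-- `restrict w X` is the word `w(X)` (possibly empty) obtained from `w` by deleting all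
occurrences of variables not belonging to `X`. -/
noncomputable def restrict (w : List ℕ) (X : Set ℕ) : List ℕ :=
  w.filter fun a => @decide (a ∈ X) (Classical.propDecidable _)

/-- The word `u` occurs as a factor of `w` at most once: there is at most one decomposition
`w = v' ++ u ++ v''`. -/
def FactorAtMostOnce (u w : List ℕ) : Prop :=
  ∀ p₁ s₁ p₂ s₂ : List ℕ, p₁ ++ u ++ s₁ = w → p₂ ++ u ++ s₂ = w → p₁ = p₂ ∧ s₁ = s₂

/-- Between any two occurrences (at positions `i < j`) of any variable `z` in `w` there occur
at least `n` pairwise distinct variables. -/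
def DistinctBetween (n : ℕ) (w : List ℕ) : Prop :=
  ∀ (z i j : ℕ), i < j → w[i]? = some z → w[j]? = some z →
    n ≤ ((w.take j).drop (i + 1)).toFinset.card

/-- A word is sparse if between any two occurrences of a repeated variable there is an
occurrence of some linear variable (i.e. a variable occurring exactly once in the word). -/
def Sparse (w : List ℕ) : Prop :=
  ∀ (z i j : ℕ), i < j → w[i]? = some z → w[j]? = some z →
    ∃ y, w.count y = 1 ∧ y ∈ (w.take j).drop (i + 1)

/-- The `j`-th power of a word, as a list. -/
def powerList (j : ℕ) (l : List ℕ) : List ℕ := (List.replicate j l).flatten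

/-! ### Powers in semigroups and subgroups of semigroups -/

/-- `spow x n` is the `n`-th power `x^n` of an element of a semigroup, for `n ≥ 1`
(with the convention `spow x 0 = x`). -/
def spow {S : Type*} [Semigroup S] (x : S) : ℕ → S
  | 0 => x
  | 1 => x
  | n + 2 => spow x (n + 1) * x

/-- `G` is a subgroup of the semigroup `S` with identity element `e`: a subsemigroup that is
a group under the induced multiplication, with identity `e`. -/
def IsSubgroupWithIdentity {S : Type*} [Semigroup S] (G : Subsemigroup S) (e : S) : Prop :=
  e ∈ G ∧ (∀ g ∈ G, e * g = g ∧ g * e = g) ∧ ∀ g ∈ G, ∃ h ∈ G, g * h = e ∧ h * g = e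

/-! ### The words `u_n` of the main construction -/

/-- The variable `x`. -/
def varx : ℕ := 0
/-- The variable `x_i` (the variables `x, x_i, y_i, z_i` are pairwise distinct). -/
def varX (i : ℕ) : ℕ := 3 * i + 1
/-- The variable `y_i`. -/
def varY (i : ℕ) : ℕ := 3 * i + 2
/-- The variable `z_i`. -/
def varZ (i : ℕ) : ℕ := 3 * i + 3

/-- `a_n[τ] = x^k x_{0τ} x^k y_1 x^k x_{1τ} x^k y_2 x^k x_{2τ} x^k ⋯ x^k y_n x^k x_{nτ} x^k`. -/
def aWord (n k : ℕ) (τ : ℕ → ℕ) : List ℕ :=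
  List.replicate k varx ++ [varX (τ 0)] ++
    (List.range n).flatMap (fun i =>
      List.replicate k varx ++ [varY (i + 1)] ++ List.replicate k varx ++ [varX (τ (i + 1))]) ++
    List.replicate k varx

/-- `b_n[τ] = x^k z_{0τ} x^k y_1 x^k z_{1τ} x^k y_2 x^k z_{2τ} x^k ⋯ x^k y_n x^k z_{nτ} x^k`. -/
def bWord (n k : ℕ) (τ : ℕ → ℕ) : List ℕ :=
  List.replicate k varx ++ [varZ (τ 0)] ++
    (List.range n).flatMap (fun i =>
      List.replicate k varx ++ [varY (i + 1)] ++ List.replicate k varx ++ [varZ (τ (i + 1))]) ++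
    List.replicate k varx

/-- `u_n = ∏_{i=0}^{n} a_n[π^i] b_n[π^i]`, where `π` is the cyclic permutation `(0 1 ⋯ n)` of
`{0, 1, …, n}`, so that `π^i` sends `j` to `(j + i) mod (n + 1)`. -/
def uWord (n k : ℕ) : List ℕ :=
  (List.range (n + 1)).flatMap fun i =>
    aWord n k (fun j => (j + i) % (n + 1)) ++ bWord n k (fun j => (j + i) % (n + 1))

/-- `X_n = {x_0, y_0, z_0, x_1, y_1, z_1, …, x_n, y_n, z_n}`. -/
def Xset (n : ℕ) : Set ℕ := {v | ∃ i ≤ n, v = varX i ∨ v = varY i ∨ v = varZ i}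


/-!
Fix a substitution `f` and put `E = f(x)^k`. Every letter of `u_n` other than `x` is flanked by
`x^k`, so the value of `u_n` is a product, in the local monoid `M = ESE`, of the `n + 1 > |M|`
blocks `a_n[π^i] b_n[π^i]`, all of which have the same content because `π^i` permutes
`{0, …, n}`. By pigeonhole two prefix products coincide, `p = p w`, hence `p = p w^k`. The
idempotent `w^k` lies `J`-below every letter, and in a monoid of `DS` the elements `J`-above an
idempotent form a submonoid; so the value `s` of `u_n` is `J`-equivalent to `w^k`. As the
`D`-class of `w^k` is closed under products, `s J s²`, so `s` lies in a subgroup of `S` with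
identity `s^k`, and `s^{m+1} = s`. Throughout, `J`-equivalence and `D` coincide because every
`t^k` is idempotent.
-/

section JOrder

variable {M : Type*} [Monoid M]

def LeJ (x y : M) : Prop := ∃ a b : M, a * y * b = x

infix:50 " ≤ᴶ " => LeJ

theorem LeJ.refl (x : M) : x ≤ᴶ x := ⟨1, 1, by simp⟩

theorem LeJ.trans {x y z : M} (hxy : x ≤ᴶ y) (hyz : y ≤ᴶ z) : x ≤ᴶ z := by
  obtain ⟨a, b, rfl⟩ := hxy
  obtain ⟨c, d, rfl⟩ := hyz
  exact ⟨a * c, d * b, by simp only [mul_assoc]⟩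

theorem List.prod_leJ_of_mem {l : List M} {g : M} (hg : g ∈ l) : l.prod ≤ᴶ g := by
  obtain ⟨l₁, l₂, rfl⟩ := List.append_of_mem hg
  exact ⟨l₁.prod, l₂.prod, by simp [mul_assoc]⟩

theorem pow_leJ_self (x : M) {k : ℕ} (hk : 0 < k) : x ^ k ≤ᴶ x :=
  ⟨1, x ^ (k - 1), by rw [one_mul, mul_pow_sub_one hk.ne']⟩

theorem leJ_of_mem_rIdeal {x z : M} (h : x ∈ rIdeal z) : x ≤ᴶ z := by
  rcases h with rfl | ⟨u, rfl⟩
  exacts [LeJ.refl x, ⟨1, u, by rw [one_mul]⟩]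

theorem leJ_of_mem_lIdeal {x z : M} (h : x ∈ lIdeal z) : x ≤ᴶ z := by
  rcases h with rfl | ⟨u, rfl⟩
  exacts [LeJ.refl x, ⟨u, 1, mul_one _⟩]

theorem GreenD.leJ {x y : M} (h : GreenD x y) : x ≤ᴶ y ∧ y ≤ᴶ x := by
  obtain ⟨z, hR, hL⟩ := h
  have hxz : x ≤ᴶ z := leJ_of_mem_rIdeal (hR ▸ Set.mem_insert x _)
  have hzx : z ≤ᴶ x := leJ_of_mem_rIdeal (hR.symm ▸ Set.mem_insert z _)
  have hzy : z ≤ᴶ y := leJ_of_mem_lIdeal (hL.symm ▸ Set.mem_insert z _)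
  have hyz : y ≤ᴶ z := leJ_of_mem_lIdeal (hL ▸ Set.mem_insert y _)
  exact ⟨hxz.trans hzy, hyz.trans hzx⟩

theorem rIdeal_subset_of_mul_eq {S : Type*} [Semigroup S] {x y v : S} (h : y * v = x) : rIdeal x ⊆ rIdeal y := by
  rintro z (rfl | ⟨w, rfl⟩)
  exacts [Or.inr ⟨v, h⟩, Or.inr ⟨v * w, by rw [← h, mul_assoc]⟩]

theorem lIdeal_subset_of_mul_eq {S : Type*} [Semigroup S] {x y v : S} (h : v * y = x) : lIdeal x ⊆ lIdeal y := by
  rintro z (rfl | ⟨w, rfl⟩)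
  exacts [Or.inr ⟨v, h⟩, Or.inr ⟨w * v, by rw [← h, mul_assoc]⟩]

end JOrder

section Periodic

variable {M : Type*} [Monoid M] {k : ℕ}

theorem mul_pow_eq_and_pow_mul_eq (hidem : ∀ t : M, IsIdempotentElem (t ^ k)) {a x b : M}
    (h : a * x * b = x) : x * b ^ k = x ∧ a ^ k * x = x := by
  have hiter : ∀ t, a ^ t * x * b ^ t = x := by
    intro t
    induction t with
    | zero => simp
    | succ t ih =>
      calc a ^ (t + 1) * x * b ^ (t + 1) = a ^ t * (a * x * b) * b ^ t := by
            rw [pow_succ, pow_succ']; simp only [mul_assoc]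
        _ = x := by rw [h, ih]
  constructor
  · conv_lhs => rw [← hiter k]
    rw [mul_assoc, (hidem b).eq, hiter]
  · conv_lhs => rw [← hiter k]
    simp only [← mul_assoc]
    rw [(hidem a).eq, hiter]

theorem exists_mul_eq_of_leJ_mul_right (hk : 0 < k) (hidem : ∀ t : M, IsIdempotentElem (t ^ k))
    {x u : M} (h : x ≤ᴶ x * u) : ∃ v, x * u * v = x := by
  obtain ⟨a, b, hab⟩ := h
  have hx := (mul_pow_eq_and_pow_mul_eq hidem (a := a) (x := x) (b := u * b)
    (by simpa only [mul_assoc] using hab)).1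
  refine ⟨b * (u * b) ^ (k - 1), ?_⟩
  rw [← mul_pow_sub_one hk.ne'] at hx
  simpa only [mul_assoc] using hx

theorem exists_mul_eq_of_leJ_mul_left (hk : 0 < k) (hidem : ∀ t : M, IsIdempotentElem (t ^ k))
    {x u : M} (h : x ≤ᴶ u * x) : ∃ v, v * (u * x) = x := by
  obtain ⟨a, b, hab⟩ := h
  have hx := (mul_pow_eq_and_pow_mul_eq hidem (a := a * u) (x := x) (b := b)
    (by simpa only [mul_assoc] using hab)).2
  refine ⟨(a * u) ^ (k - 1) * a, ?_⟩
  rw [← pow_sub_one_mul hk.ne'] at hx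
  simpa only [mul_assoc] using hx

theorem greenD_iff_leJ (hk : 0 < k) (hidem : ∀ t : M, IsIdempotentElem (t ^ k)) {x y : M} :
    GreenD x y ↔ x ≤ᴶ y ∧ y ≤ᴶ x := by
  refine ⟨GreenD.leJ, fun ⟨⟨a, b, hab⟩, ⟨c, d, hcd⟩⟩ => ?_⟩
  have hxd : x ≤ᴶ x * d := ⟨a * c, b, by
    calc a * c * (x * d) * b = a * (c * x * d) * b := by simp only [mul_assoc]
      _ = x := by rw [hcd, hab]⟩
  obtain ⟨v, hv⟩ := exists_mul_eq_of_leJ_mul_right hk hidem hxd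
  have hy : c * (x * d) = y := by rw [← hcd, mul_assoc]
  have hdy : x * d ≤ᴶ c * (x * d) := ⟨a, b * d, by rw [hy, ← hab]; simp only [mul_assoc]⟩
  obtain ⟨w, hw⟩ := exists_mul_eq_of_leJ_mul_left hk hidem hdy
  rw [hy] at hw
  exact ⟨x * d, (rIdeal_subset_of_mul_eq hv).antisymm (rIdeal_subset_of_mul_eq rfl),
    (lIdeal_subset_of_mul_eq hw).antisymm (lIdeal_subset_of_mul_eq hy)⟩

theorem pow_mul_self_of_leJ_sq (hk : 0 < k) (hidem : ∀ t : M, IsIdempotentElem (t ^ k)) {s : M}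
    (h : s ≤ᴶ s * s) : s ^ k * s = s := by
  obtain ⟨v, hv⟩ := exists_mul_eq_of_leJ_mul_right hk hidem h
  have hiter : ∀ t, s ^ (t + 1) * v ^ t = s := by
    intro t
    induction t with
    | zero => simp
    | succ t ih =>
      calc s ^ (t + 1 + 1) * v ^ (t + 1) = s ^ t * (s * s * v) * v ^ t := by
            rw [pow_succ, pow_succ, pow_succ' v]; simp only [mul_assoc]
        _ = s := by rw [hv, ← pow_succ, ih]
  calc s ^ k * s = s ^ k * (s ^ (k + 1) * v ^ k) := by rw [hiter]
    _ = s ^ k * s ^ k * s * v ^ k := by rw [pow_succ]; simp only [mul_assoc]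
    _ = s := by rw [(hidem s).eq, ← pow_succ, hiter]

theorem IsIdempotentElem.leJ_pow_mul_comm (hk : 0 < k) (hidem : ∀ t : M, IsIdempotentElem (t ^ k))
    {ε p q : M} (hε : IsIdempotentElem ε) (h : p * q = ε) :
    ε ≤ᴶ (q * p) ^ k ∧ (q * p) ^ k ≤ᴶ ε := by
  refine ⟨⟨p, q, ?_⟩, ⟨(q * p) ^ (k - 1) * q, p * (q * p) ^ (k - 1), ?_⟩⟩
  · rw [((show SemiconjBy p (q * p) (p * q) from (mul_assoc p q p).symm).pow_right k).eq, mul_assoc, ← pow_succ, h,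
      hε.pow_succ_eq]
  · calc (q * p) ^ (k - 1) * q * ε * (p * (q * p) ^ (k - 1))
        = (q * p) ^ (k - 1) * (q * p) * ((q * p) * (q * p) ^ (k - 1)) := by
          rw [← h]; simp only [mul_assoc]
      _ = (q * p) ^ k := by rw [pow_sub_one_mul hk.ne', mul_pow_sub_one hk.ne', (hidem _).eq]

end Periodic

section DS

variable {M : Type*} [Monoid M] [Finite M] {k : ℕ}

theorem MemDS.leJ_mul (hDS : MemDS M) (hk : 0 < k) (hidem : ∀ t : M, IsIdempotentElem (t ^ k))
    {ε a b : M} (hε : IsIdempotentElem ε) (ha : ε ≤ᴶ a) (hb : ε ≤ᴶ b) : ε ≤ᴶ a * b := by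
  obtain ⟨x, y, hxy⟩ := ha
  obtain ⟨u, v, huv⟩ := hb
  -- `(y x a)^k` ends with `a`, `(b v u)^k` begins with `b`, and both are `J`-equivalent to `ε`
  have he := hε.leJ_pow_mul_comm hk hidem (p := x * a) (q := y) hxy
  have hf := hε.leJ_pow_mul_comm hk hidem (p := u) (q := b * v) (by rw [← huv, mul_assoc])
  have hef := hDS ε _ _ hε ((greenD_iff_leJ hk hidem).2 he.symm)
    ((greenD_iff_leJ hk hidem).2 hf.symm)
  refine ((greenD_iff_leJ hk hidem).1 hef).2.trans
    ⟨(y * (x * a)) ^ (k - 1) * (y * x), v * u * (b * v * u) ^ (k - 1), ?_⟩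
  rw [← pow_sub_one_mul hk.ne' (y * (x * a)), ← mul_pow_sub_one hk.ne' (b * v * u)]
  simp only [mul_assoc]

theorem MemDS.leJ_prod (hDS : MemDS M) (hk : 0 < k) (hidem : ∀ t : M, IsIdempotentElem (t ^ k))
    {ε : M} (hε : IsIdempotentElem ε) {l : List M} (hl : ∀ g ∈ l, ε ≤ᴶ g) : ε ≤ᴶ l.prod := by
  induction l with
  | nil => exact ⟨ε, 1, by simp⟩
  | cons g l ih =>
    exact hDS.leJ_mul hk hidem hε (hl g List.mem_cons_self)
      (ih fun g' hg' => hl g' (List.mem_cons_of_mem g hg'))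

theorem List.exists_prod_mul_prod_eq_of_card_lt {l : List M} (hl : Nat.card M < l.length) :
    ∃ l₁ l₂ l₃ : List M, l = l₁ ++ l₂ ++ l₃ ∧ l₂ ≠ [] ∧ l₁.prod * l₂.prod = l₁.prod := by
  have hinj : ¬ Function.Injective fun i : Fin l.length => (l.take i).prod := fun hinj => by
    have := Nat.card_le_card_of_injective _ hinj
    simp only [Nat.card_eq_fintype_card, Fintype.card_fin] at this
    omega
  obtain ⟨i, j, hij, hne⟩ := Function.not_injective_iff.1 hinj
  wlog hlt : i < j generalizing i j
  · exact this j i hij.symm hne.symm (lt_of_le_of_ne (not_lt.1 hlt) hne.symm)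
  refine ⟨l.take i, (l.drop i).take (j - i), l.drop j, ?_, ?_, ?_⟩
  · rw [← List.take_add, Nat.add_sub_cancel' hlt.le, List.take_append_drop]
  · simp only [ne_eq, List.take_eq_nil_iff, List.drop_eq_nil_iff, not_or]
    omega
  · rw [← List.prod_append, ← List.take_add, Nat.add_sub_cancel' hlt.le]
    exact hij.symm

theorem MemDS.pow_mul_self_of_forall_subset (hDS : MemDS M) (hk : 0 < k)
    (hidem : ∀ t : M, IsIdempotentElem (t ^ k)) (blocks : List (List M))
    (hlen : Nat.card M < blocks.length) (hcontent : ∀ B ∈ blocks, ∀ B' ∈ blocks, B ⊆ B') :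
    blocks.flatten.prod ^ k * blocks.flatten.prod = blocks.flatten.prod := by
  obtain ⟨l₁, l₂, l₃, hsplit, hne, hloop⟩ :=
    List.exists_prod_mul_prod_eq_of_card_lt (l := blocks.map List.prod) (by simpa using hlen)
  have hε : IsIdempotentElem (l₂.prod ^ k) := hidem _
  obtain ⟨c, l₂, rfl⟩ := List.exists_cons_of_ne_nil hne
  obtain ⟨B, hB, rfl⟩ : ∃ B ∈ blocks, B.prod = c := List.mem_map.1 (by simp [hsplit])
  have hletters : ∀ g ∈ blocks.flatten, ((B.prod :: l₂).prod) ^ k ≤ᴶ g := by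
    intro g hg
    obtain ⟨B₀, hB₀, hgB₀⟩ := List.mem_flatten.1 hg
    exact (pow_leJ_self _ hk).trans <| LeJ.trans ⟨1, l₂.prod, by simp⟩
      (List.prod_leJ_of_mem (hcontent B₀ hB₀ B hB hgB₀))
  have hεs := hDS.leJ_prod hk hidem hε hletters
  have hsε : blocks.flatten.prod ≤ᴶ (B.prod :: l₂).prod ^ k := by
    refine ⟨l₁.prod, (B.prod :: l₂).prod * l₃.prod, ?_⟩
    rw [List.prod_flatten, hsplit, List.prod_append, List.prod_append,
      (mul_pow_eq_and_pow_mul_eq hidem (a := 1) (by rwa [one_mul])).1, mul_assoc]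
  have hD := (greenD_iff_leJ hk hidem).2 ⟨hsε, hεs⟩
  exact pow_mul_self_of_leJ_sq hk hidem
    (hsε.trans ((greenD_iff_leJ hk hidem).1 (hDS _ _ _ hε hD hD)).2)

end DS

section Subgroups

variable {S : Type*} [Semigroup S]

def maximalSubgroup (e : S) : Subsemigroup S where
  carrier := {g | e * g = g ∧ g * e = g ∧ ∃ h, e * h = h ∧ h * e = h ∧ g * h = e ∧ h * g = e}
  mul_mem' := by
    rintro g₁ g₂ ⟨hl₁, hr₁, h₁, hhl₁, hhr₁, hgh₁, hhg₁⟩ ⟨hl₂, hr₂, h₂, hhl₂, hhr₂, hgh₂, hhg₂⟩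
    refine ⟨by rw [← mul_assoc, hl₁], by rw [mul_assoc, hr₂], h₂ * h₁, by rw [← mul_assoc, hhl₂],
      by rw [mul_assoc, hhr₁], ?_, ?_⟩
    · rw [mul_assoc, ← mul_assoc g₂, hgh₂, ← mul_assoc, hr₁, hgh₁]
    · rw [mul_assoc, ← mul_assoc h₁, hhg₁, ← mul_assoc, hhr₂, hhg₂]

theorem isIdempotentElem_of_mem_maximalSubgroup {e g : S} (hg : g ∈ maximalSubgroup e) :
    IsIdempotentElem e := by
  obtain ⟨hl, -, h, -, -, hgh, -⟩ := hg
  rw [IsIdempotentElem]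
  nth_rewrite 2 [← hgh]
  rw [← mul_assoc, hl, hgh]

theorem isSubgroupWithIdentity_maximalSubgroup {e : S} (he : IsIdempotentElem e) :
    IsSubgroupWithIdentity (maximalSubgroup e) e :=
  ⟨⟨he, he, e, he, he, he, he⟩, fun _ hg => ⟨hg.1, hg.2.1⟩,
    fun g ⟨hl, hr, h, hhl, hhr, hgh, hhg⟩ => ⟨h, ⟨hhl, hhr, g, hl, hr, hhg, hgh⟩, hgh, hhg⟩⟩

theorem MulHom.mem_maximalSubgroup {N : Type*} [Semigroup N] (φ : S →ₙ* N) {e g : S}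
    (hg : g ∈ maximalSubgroup e) : φ g ∈ maximalSubgroup (φ e) := by
  obtain ⟨hl, hr, h, hhl, hhr, hgh, hhg⟩ := hg
  exact ⟨by rw [← map_mul, hl], by rw [← map_mul, hr], φ h, by rw [← map_mul, hhl],
    by rw [← map_mul, hhr], by rw [← map_mul, hgh], by rw [← map_mul, hhg]⟩

theorem mem_maximalSubgroup_pow {M : Type*} [Monoid M] {k : ℕ} (hk : 0 < k) {x : M}
    (hx : x ^ k * x = x) : x ∈ maximalSubgroup (x ^ k) := by
  obtain ⟨j, rfl⟩ : ∃ j, k = j + 1 := ⟨k - 1, by omega⟩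
  have hper : ∀ i, x ^ (j + 1) * x ^ (i + 1) = x ^ (i + 1) := fun i => by
    rw [pow_succ' x i, ← mul_assoc, hx]
  have hsq : x * x ^ (j + j + 1) = x ^ (j + 1) := by
    rw [← pow_succ', show j + j + 1 + 1 = (j + 1) + (j + 1) by omega, pow_add, hper]
  refine ⟨hx, by rw [← pow_mul_comm', hx], x ^ (j + j + 1), hper _, by rw [pow_mul_comm, hper],
    hsq, by rw [pow_mul_comm', hsq]⟩

end Subgroups

theorem map_spow {S N : Type*} [Semigroup S] [Semigroup N] (φ : S →ₙ* N) (x : S) :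
    ∀ j, φ (spow x j) = spow (φ x) j
  | 0 => rfl
  | 1 => rfl
  | j + 2 => by rw [spow, spow, map_mul, map_spow φ x (j + 1)]

theorem spow_eq_pow {M : Type*} [Monoid M] (x : M) : ∀ {j : ℕ}, 0 < j → spow x j = x ^ j
  | 1, _ => (pow_one x).symm
  | j + 2, _ => by rw [spow, spow_eq_pow x j.succ_pos, ← pow_succ]

theorem MulHom.map_pow_eq_spow {M S : Type*} [Monoid M] [Semigroup S] (φ : M →ₙ* S) (x : M)
    {j : ℕ} (hj : 0 < j) : φ (x ^ j) = spow (φ x) j := by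
  rw [← spow_eq_pow x hj, map_spow]

theorem coe_spow {S : Type*} [Semigroup S] (x : S) {j : ℕ} (hj : 0 < j) :
    ((spow x j : S) : WithOne S) = (x : WithOne S) ^ j := by
  rw [← spow_eq_pow _ hj, ← WithOne.coeMulHom_apply, map_spow]
  rfl

theorem spow_succ_eq_self_of_exponent {M S : Type*} [Monoid M] [Semigroup S] {k m : ℕ}
    (φ : M →ₙ* S) (hexp : ∀ (G : Subsemigroup S) (e : S), IsSubgroupWithIdentity G e →
      ∀ g ∈ G, spow g m = e) (hk : 0 < k) (hm : 0 < m) {x : M} (hx : x ^ k * x = x) :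
    spow (φ x) (m + 1) = φ x := by
  have hmem := φ.mem_maximalSubgroup (mem_maximalSubgroup_pow hk hx)
  have he := hexp _ _ (isSubgroupWithIdentity_maximalSubgroup
    (isIdempotentElem_of_mem_maximalSubgroup hmem)) _ hmem
  obtain ⟨m, rfl⟩ : ∃ m', m = m' + 1 := ⟨m - 1, by omega⟩
  rw [spow, he, ← map_mul, hx]

section Words

theorem MulHom.map_list_prod_of_ne_nil {M N : Type*} [Monoid M] [Monoid N] (φ : M →ₙ* N)
    {l : List M} (hl : l ≠ []) : φ l.prod = (l.map φ).prod := by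
  induction l with
  | nil => contradiction
  | cons a l ih =>
    rcases eq_or_ne l [] with rfl | hl'
    · simp
    · rw [List.prod_cons, map_mul, ih hl', List.map_cons, List.prod_cons]

theorem IsIdempotentElem.mul_prod_map_mul {α M : Type*} [Monoid M] {e : M}
    (he : IsIdempotentElem e) (φ : α → M) {l : List α} (hl : l ≠ []) :
    e * (l.map (φ · * e)).prod = (l.map (e * φ · * e)).prod := by
  induction l with
  | nil => contradiction
  | cons a l ih =>
    rcases eq_or_ne l [] with rfl | hl'
    · simp [mul_assoc]
    · rw [List.map_cons, List.prod_cons, List.map_cons, List.prod_cons, ← ih hl',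
        show e * φ a * e * (e * (l.map (φ · * e)).prod)
          = e * φ a * (e * e) * (l.map (φ · * e)).prod by simp only [mul_assoc], he.eq]
      simp only [mul_assoc]

theorem List.prod_map_flatMap {α ι M : Type*} [Monoid M] (φ : α → M) (g : ι → List α)
    (L : List ι) : ((L.flatMap g).map φ).prod = (L.map fun i => ((g i).map φ).prod).prod := by
  induction L with
  | nil => simp
  | cons i L ih => simp [ih]

theorem prod_map_append_flatMap_cons {α M : Type*} [Monoid M] (φ : α → M) (w : List α) {vs : List α}
    (hvs : vs ≠ []) (he : IsIdempotentElem (w.map φ).prod) :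
    ((w ++ vs.flatMap (· :: w)).map φ).prod
      = (vs.map fun v => (w.map φ).prod * φ v * (w.map φ).prod).prod := by
  rw [← he.mul_prod_map_mul φ hvs, List.map_append, List.prod_append, List.prod_map_flatMap]
  simp

theorem List.append_flatMap_append_eq {α ι : Type*} (w : List α) (a : α) (g₁ g₂ : ι → α)
    (L : List ι) :
    w ++ [a] ++ L.flatMap (fun i => w ++ [g₁ i] ++ w ++ [g₂ i]) ++ w
      = w ++ (a :: L.flatMap fun i => [g₁ i, g₂ i]).flatMap (· :: w) := by
  induction L generalizing a with
  | nil => simp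
  | cons i L ih => simpa using ih (g₂ i)

def blockLetters (c : ℕ → ℕ) (n : ℕ) (τ : ℕ → ℕ) : List ℕ :=
  c (τ 0) :: (List.range n).flatMap fun i => [varY (i + 1), c (τ (i + 1))]

theorem aWord_eq (n k : ℕ) (τ : ℕ → ℕ) :
    aWord n k τ
      = List.replicate k varx ++ (blockLetters varX n τ).flatMap (· :: List.replicate k varx) :=
  List.append_flatMap_append_eq _ _ _ _ _

theorem bWord_eq (n k : ℕ) (τ : ℕ → ℕ) :
    bWord n k τ
      = List.replicate k varx ++ (blockLetters varZ n τ).flatMap (· :: List.replicate k varx) :=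
  List.append_flatMap_append_eq _ _ _ _ _

theorem mem_blockLetters_iff {c : ℕ → ℕ} {n : ℕ} {τ : ℕ → ℕ} {v : ℕ} :
    v ∈ blockLetters c n τ ↔ (∃ j ≤ n, v = c (τ j)) ∨ ∃ i < n, v = varY (i + 1) := by
  simp only [blockLetters, List.mem_cons, List.mem_flatMap, List.mem_range, List.not_mem_nil,
    or_false]
  constructor
  · rintro (rfl | ⟨i, hi, rfl | rfl⟩)
    exacts [.inl ⟨0, Nat.zero_le _, rfl⟩, .inr ⟨i, hi, rfl⟩, .inl ⟨i + 1, hi, rfl⟩]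
  · rintro (⟨_ | j, hj, rfl⟩ | ⟨i, hi, rfl⟩)
    exacts [.inl rfl, .inr ⟨j, by omega, .inr rfl⟩, .inr ⟨i, hi, .inl rfl⟩]

theorem exists_add_mod_eq (t : ℕ) {n l : ℕ} (hl : l ≤ n) : ∃ j ≤ n, (j + t) % (n + 1) = l := by
  refine ⟨(l + (n + 1) - t % (n + 1)) % (n + 1), Nat.le_of_lt_succ (Nat.mod_lt _ n.succ_pos), ?_⟩
  have := Nat.mod_lt t (show 0 < n + 1 by omega)
  rw [Nat.mod_add_mod, ← Nat.add_mod_mod, Nat.sub_add_cancel (by omega), Nat.add_mod_right,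
    Nat.mod_eq_of_lt (by omega)]

theorem mem_blockLetters_rotate {c : ℕ → ℕ} {n t v : ℕ} :
    v ∈ blockLetters c n (fun j => (j + t) % (n + 1))
      ↔ (∃ l ≤ n, v = c l) ∨ ∃ i < n, v = varY (i + 1) := by
  rw [mem_blockLetters_iff]
  refine or_congr_left ⟨?_, ?_⟩
  · rintro ⟨j, -, rfl⟩
    exact ⟨_, Nat.le_of_lt_succ (Nat.mod_lt _ n.succ_pos), rfl⟩
  · rintro ⟨l, hl, rfl⟩
    obtain ⟨j, hj, hjl⟩ := exists_add_mod_eq t hl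
    exact ⟨j, hj, by rw [hjl]⟩

-- the letters other than `x` of the block `a_n[π^t] b_n[π^t]` of `u_n`
def blockVars (n t : ℕ) : List ℕ :=
  blockLetters varX n (fun j => (j + t) % (n + 1)) ++ blockLetters varZ n (fun j => (j + t) % (n + 1))

theorem blockVars_subset (n t t' : ℕ) : blockVars n t ⊆ blockVars n t' := by
  intro v
  simp only [blockVars, List.mem_append, mem_blockLetters_rotate]
  exact id

theorem uWord_ne_nil (n k : ℕ) : uWord n k ≠ [] := by
  intro h
  have := List.flatMap_eq_nil_iff.1 h 0 (List.mem_range.2 n.succ_pos)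
  simp [aWord] at this

variable {S : Type*} [Semigroup S]

theorem coe_lift_wOfList (f : ℕ → S) {l : List ℕ} (hl : l ≠ []) :
    ((FreeSemigroup.lift f (wOfList l) : S) : WithOne S)
      = (l.map fun v => (f v : WithOne S)).prod := by
  have hfold : ∀ (x : S) (l : List ℕ), ((l.foldl (· * f ·) x : S) : WithOne S)
      = x * (l.map fun v => (f v : WithOne S)).prod := by
    intro x l
    induction l generalizing x with
    | nil => simp
    | cons b l ih => simp [ih, mul_assoc]
  obtain ⟨a, l, rfl⟩ := List.exists_cons_of_ne_nil hl
  rw [List.map_cons, List.prod_cons]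
  exact hfold (f a) l

theorem coe_lift_wOfList_powerList (f : ℕ → S) {l : List ℕ} (hl : l ≠ []) {j : ℕ} (hj : 0 < j) :
    ((FreeSemigroup.lift f (wOfList (powerList j l)) : S) : WithOne S)
      = ((FreeSemigroup.lift f (wOfList l) : S) : WithOne S) ^ j := by
  have hne : powerList j l ≠ [] := by simp [powerList, hl, hj.ne']
  rw [coe_lift_wOfList f hne, coe_lift_wOfList f hl]
  simp [powerList, List.map_flatten, List.prod_flatten]

theorem coe_lift_uWord (f : ℕ → S) {k : ℕ} (hk : 0 < k) (hE : IsIdempotentElem (spow (f varx) k))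
    (n : ℕ) :
    ((FreeSemigroup.lift f (wOfList (uWord n k)) : S) : WithOne S)
      = (((List.range (n + 1)).flatMap (blockVars n)).map
          fun v => ((spow (f varx) k * f v * spow (f varx) k : S) : WithOne S)).prod := by
  have hw : ((List.replicate k varx).map fun v => (f v : WithOne S)).prod = spow (f varx) k := by
    rw [List.map_replicate, List.prod_replicate, coe_spow _ hk]
  have hE' : IsIdempotentElem ((List.replicate k varx).map fun v => (f v : WithOne S)).prod := by
    rw [hw, IsIdempotentElem, ← WithOne.coe_mul, hE.eq]
  rw [coe_lift_wOfList f (uWord_ne_nil n k), uWord, List.prod_map_flatMap,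
    List.prod_map_flatMap]
  refine congrArg List.prod (List.map_congr_left fun t _ => ?_)
  rw [List.map_append, List.prod_append, aWord_eq, bWord_eq,
    prod_map_append_flatMap_cons _ _ (vs := blockLetters varX n _) (List.cons_ne_nil _ _) hE',
    prod_map_append_flatMap_cons _ _ (vs := blockLetters varZ n _) (List.cons_ne_nil _ _) hE',
    hw, blockVars, List.map_append, List.prod_append]
  simp

end Words

abbrev localMonoid {S : Type*} [Semigroup S] {e : S} (he : IsIdempotentElem e) :
    Monoid (localSub e) :=
  { (inferInstance : Semigroup (localSub e)) with
    one := ⟨e, e, by rw [he.eq, he.eq]⟩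
    one_mul := by
      rintro ⟨_, s, rfl⟩
      exact Subtype.ext (show e * (e * s * e) = e * s * e by rw [← mul_assoc, ← mul_assoc, he.eq])
    mul_one := by
      rintro ⟨_, s, rfl⟩
      exact Subtype.ext (show e * s * e * e = e * s * e by rw [mul_assoc, he.eq]) }

/-- **Semigroups in `LDS` satisfy `u_n ≈ u_n^{m+1}`.** Let `S` be a finite semigroup in `LDS`,
let `k ≥ 1` be such that `s^k` is idempotent for every `s ∈ S`, and let `m ≥ 1` be such that
`g^m` is the identity element of `G` for every subgroup `G` of `S`. Then for every `n > |S|`,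
the semigroup `S` satisfies the identity `u_n ≈ u_n^{m+1}`. -/
theorem LDS_satisfies_uWord_identity (S : Type) [Semigroup S] [Finite S] (hS : MemLDS S)
    (k : ℕ) (hk : 1 ≤ k) (hkidem : ∀ s : S, spow s k * spow s k = spow s k)
    (m : ℕ) (hm : 1 ≤ m)
    (hexp : ∀ (G : Subsemigroup S) (e : S), IsSubgroupWithIdentity G e →
      ∀ g ∈ G, spow g m = e)
    (n : ℕ) (hn : Nat.card S < n) :
    Satisfies S (wOfList (uWord n k)) (wOfList (powerList (m + 1) (uWord n k))) := by
  intro f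
  set E := spow (f varx) k
  have hE : IsIdempotentElem E := hkidem (f varx)
  let _ := localMonoid hE
  let ι := MulMemClass.subtype (localSub E)
  have hidem : ∀ t : localSub E, IsIdempotentElem (t ^ k) := fun t => Subtype.val_injective <| by
    change ι (t ^ k * t ^ k) = ι (t ^ k)
    rw [map_mul, ι.map_pow_eq_spow t hk]
    exact hkidem t
  let g : ℕ → localSub E := fun v => ⟨E * f v * E, f v, rfl⟩
  let blocks := (List.range (n + 1)).map fun t => (blockVars n t).map g
  have hs := (hS E hE).pow_mul_self_of_forall_subset hk hidem blocks
    ((Finite.card_subtype_le _).trans_lt (by simpa [blocks] using hn.trans n.lt_succ_self))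
    (by simp only [blocks, List.mem_map]
        rintro _ ⟨t, -, rfl⟩ _ ⟨t', -, rfl⟩
        exact List.map_subset g (blockVars_subset n t t'))
  have hflat : blocks.flatten = ((List.range (n + 1)).flatMap (blockVars n)).map g := by
    rw [List.map_flatMap]
    rfl
  have hval : ((FreeSemigroup.lift f (wOfList (uWord n k)) : S) : WithOne S)
      = ((ι blocks.flatten.prod : S) : WithOne S) := by
    rw [coe_lift_uWord f hk hE, hflat, ← WithOne.coeMulHom_apply, ← MulHom.comp_apply,
      MulHom.map_list_prod_of_ne_nil _ (by simpa [blockVars, blockLetters] using ⟨0, n.zero_le⟩),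
      List.map_map]
    rfl
  apply WithOne.coe_injective
  rw [coe_lift_wOfList_powerList f (uWord_ne_nil n k) m.succ_pos, hval, ← coe_spow _ m.succ_pos,
    spow_succ_eq_self_of_exponent ι hexp hk hm hs]
end
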